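/- arXiv:1412.5863 — 3 statements merged into one kernel-verified Lean document; each statement's English description precedes it below -/
import Mathlib

section
/- Let u : ℝ² → ℝ be a smooth function that is ℤ²-periodic, i.e. u(x+k) = u(x) for all x ∈ ℝ² and k ∈ ℤ². Then ∫_{[0,1]²} det D²u(x) / (1 + |∇u(x)|²)^{3/2} dx = 0; that is, the integral of the Gaussian curvature of the graph of u against the surface area element √(1+|∇u|²) over one periodicity cell vanishes (a Gauss–Bonnet type identity for periodic graphs). -/
open MeasureTheory

noncomputable section

abbrev Euc (N : ℕ) := EuclideanSpace ℝ (Fin N)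

/-- Hessian matrix `(D²u(x))_{ij} = ∂_i ∂_j u(x)`. -/
def hessian {N : ℕ} (u : Euc N → ℝ) (x : Euc N) : Matrix (Fin N) (Fin N) ℝ :=
  Matrix.of fun i j =>
    fderiv ℝ (fun y => fderiv ℝ u y (EuclideanSpace.single j 1)) x (EuclideanSpace.single i 1)

/-- The integer translation vector associated to `k : Fin N → ℤ`. -/
def intVec {N : ℕ} (k : Fin N → ℤ) : Euc N :=
  (WithLp.equiv 2 (Fin N → ℝ)).symm fun i => (k i : ℝ)

/-- The unit cube `[0,1]^N`. -/
def unitCube (N : ℕ) : Set (Euc N) := {x | ∀ i, x i ∈ Set.Icc (0 : ℝ) 1}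

/-!
Write `p = ∂₀u`, `q = ∂₁u` and `F(a, b) = a / ((1 + b²) √(1 + a² + b²))`, chosen so that
`∂F/∂a = (1 + a² + b²)^(-3/2)`. For any `F`, the field `(F(p, q) ∂₁q, -F(p, q) ∂₀q)` has divergence
`∂F/∂a (p, q) · det D(p, q)`: the terms `F(p, q) ∂₀∂₁q` cancel by symmetry of second derivatives,
and the `∂F/∂b` terms cancel by antisymmetry. Since `D(p, q) = D²u`, the curvature integrand is
the divergence of a `ℤ²`-periodic field, whose fluxes through opposite faces of the unit square
cancel.
-/

open Function Set

section Periodic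

variable {𝕜 E F : Type*} [NontriviallyNormedField 𝕜] [NormedAddCommGroup E] [NormedSpace 𝕜 E]
  [NormedAddCommGroup F] [NormedSpace 𝕜 F]

theorem Function.Periodic.fderiv {f : E → F} {c : E} (h : Periodic f c) :
    Periodic (fderiv 𝕜 f) c := fun x => by
  rw [← fderiv_comp_add_right, funext h]

end Periodic

section Jacobian

variable {E : Type*} [NormedAddCommGroup E] [NormedSpace ℝ E]

theorem ContinuousLinearMap.apply_mk_eq_mul_add_mul (L : ℝ × ℝ →L[ℝ] ℝ) (a b : ℝ) :
    L (a, b) = a * L (1, 0) + b * L (0, 1) := by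
  rw [show ((a, b) : ℝ × ℝ) = a • (1, 0) + b • (0, 1) by simp, map_add, map_smul, map_smul,
    smul_eq_mul, smul_eq_mul]

theorem fderiv_comp_mul_fderiv_sub_swap {F : ℝ × ℝ → ℝ} {L : ℝ × ℝ →L[ℝ] ℝ} {p q : E → ℝ}
    {x : E} (hF : HasFDerivAt F L (p x, q x)) (hp : DifferentiableAt ℝ p x)
    (hq : ContDiffAt ℝ 2 q x) (v w : E) :
    fderiv ℝ (fun y => F (p y, q y) * fderiv ℝ q y w) x v
      - fderiv ℝ (fun y => F (p y, q y) * fderiv ℝ q y v) x w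
      = L (1, 0) * (fderiv ℝ p x v * fderiv ℝ q x w - fderiv ℝ p x w * fderiv ℝ q x v) := by
  have hFpq : HasFDerivAt (fun y => F (p y, q y))
      (L.comp ((fderiv ℝ p x).prod (fderiv ℝ q x))) x :=
    hF.comp x (hp.hasFDerivAt.prodMk (hq.differentiableAt (by simp)).hasFDerivAt)
  have hdq : HasFDerivAt (fderiv ℝ q) (fderiv ℝ (fderiv ℝ q) x) x :=
    ((hq.fderiv_right (m := 1) le_rfl).differentiableAt (by simp)).hasFDerivAt
  have hsymm := hq.isSymmSndFDerivAt (by simp)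
  have key : ∀ a b : E, fderiv ℝ (fun y => F (p y, q y) * fderiv ℝ q y b) x a
      = F (p x, q x) * fderiv ℝ (fderiv ℝ q) x a b
        + fderiv ℝ q x b * L (fderiv ℝ p x a, fderiv ℝ q x a) := by
    intro a b
    have hprod : HasFDerivAt (fun y => F (p y, q y) * fderiv ℝ q y b) _ x :=
      hFpq.mul (hdq.clm_apply (hasFDerivAt_const b x))
    rw [hprod.fderiv]
    simp
  rw [key, key, hsymm v w, L.apply_mk_eq_mul_add_mul (fderiv ℝ p x v),
    L.apply_mk_eq_mul_add_mul (fderiv ℝ p x w)]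
  ring

end Jacobian

theorem hasDerivAt_div_sqrt_add_sq {c : ℝ} (hc : 0 < c) (t : ℝ) :
    HasDerivAt (fun t => t / √(c + t ^ 2)) (c / √(c + t ^ 2) ^ 3) t := by
  have hpos : 0 < c + t ^ 2 := by positivity
  have hsqrt : HasDerivAt (fun t => √(c + t ^ 2)) (2 * t / (2 * √(c + t ^ 2))) t := by
    simpa using ((hasDerivAt_pow 2 t).const_add c).sqrt hpos.ne'
  refine ((hasDerivAt_id' t).div hsqrt (Real.sqrt_pos.2 hpos).ne').congr_deriv ?_
  have hsq := Real.sq_sqrt hpos.le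
  field_simp
  rw [hsq]
  ring

def curvaturePotential (z : ℝ × ℝ) : ℝ :=
  z.1 / √(1 + z.2 ^ 2 + z.1 ^ 2) / (1 + z.2 ^ 2)

theorem contDiff_curvaturePotential {n : WithTop ℕ∞} : ContDiff ℝ n curvaturePotential := by
  have hS : ∀ z : ℝ × ℝ, 0 < 1 + z.2 ^ 2 + z.1 ^ 2 := fun z => by positivity
  refine (contDiff_fst.div (((contDiff_const.add (contDiff_snd.pow 2)).add
    (contDiff_fst.pow 2)).sqrt fun z => (hS z).ne') fun z => ?_).div
    (contDiff_const.add (contDiff_snd.pow 2)) fun z => by positivity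
  exact (Real.sqrt_pos.2 (hS z)).ne'

theorem fderiv_curvaturePotential_apply_one_zero (z : ℝ × ℝ) :
    fderiv ℝ curvaturePotential z (1, 0) = 1 / (1 + z.1 ^ 2 + z.2 ^ 2) ^ ((3 : ℝ) / 2) := by
  have hc : 0 < 1 + z.2 ^ 2 := by positivity
  have hF : HasFDerivAt curvaturePotential (fderiv ℝ curvaturePotential z) (z.1, z.2) :=
    (contDiff_curvaturePotential.differentiable (n := 1) one_ne_zero z).hasFDerivAt
  have hline : HasDerivAt (fun t => curvaturePotential (t, z.2))
      (fderiv ℝ curvaturePotential z (1, 0)) z.1 :=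
    HasFDerivAt.comp_hasDerivAt (l := curvaturePotential) (f := fun t => (t, z.2)) z.1 hF
      ((hasDerivAt_id' z.1).prodMk (hasDerivAt_const z.1 z.2))
  refine hline.unique
    (((hasDerivAt_div_sqrt_add_sq hc z.1).div_const (1 + z.2 ^ 2)).congr_deriv ?_)
  rw [Real.rpow_div_two_eq_sqrt _ (by positivity), add_right_comm, Real.rpow_ofNat]
  field_simp

theorem Fin.insertNth_one_eq_insertNth_zero_add_single {n : ℕ} (i : Fin (n + 1))
    (y : Fin n → ℝ) :
    i.insertNth (α := fun _ => ℝ) 1 y = i.insertNth 0 y + Pi.single i 1 := by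
  rw [Fin.insertNth_eq_iff]
  refine ⟨by simp, funext fun j => ?_⟩
  simp [Fin.removeNth]

theorem integral_Icc_divergence_eq_zero_of_periodic {n : ℕ}
    (V : Fin (n + 1) → (Fin (n + 1) → ℝ) → ℝ) (hV : ∀ i, ContDiff ℝ 1 (V i))
    (hper : ∀ i, Periodic (V i) (Pi.single i 1)) :
    ∫ x in Icc (0 : Fin (n + 1) → ℝ) 1, ∑ i, fderiv ℝ (V i) x (Pi.single i 1) = 0 := by
  have hdiv : Continuous fun x => ∑ i, fderiv ℝ (V i) x (Pi.single i 1) :=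
    continuous_finsetSum _ fun i _ =>
      ((hV i).continuous_fderiv one_ne_zero).clm_apply continuous_const
  rw [integral_divergence_of_hasFDerivAt_off_countable' 0 1 zero_le_one V
    (fun i x => fderiv ℝ (V i) x) ∅ countable_empty (fun i => (hV i).continuous.continuousOn)
    (fun x _ i => ((hV i).differentiable one_ne_zero x).hasFDerivAt) hdiv.integrableOn_Icc]
  refine Finset.sum_eq_zero fun i _ => sub_eq_zero.2 ?_
  congr 1 with y
  rw [Pi.one_apply, Pi.zero_apply, Fin.insertNth_one_eq_insertNth_zero_add_single, hper i]

section PartialDeriv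

variable {n : ℕ}

def partialDeriv (i : Fin n) (f : Euc n → ℝ) (x : Euc n) : ℝ :=
  fderiv ℝ f x (EuclideanSpace.single i 1)

theorem Function.Periodic.partialDeriv {f : Euc n → ℝ} {c : Euc n} (h : Periodic f c)
    (i : Fin n) : Periodic (partialDeriv i f) c := fun x => by
  simp only [_root_.partialDeriv, h.fderiv x]

theorem ContDiff.partialDeriv {k m : WithTop ℕ∞} {f : Euc n → ℝ} (hf : ContDiff ℝ k f)
    (hmk : m + 1 ≤ k) (i : Fin n) : ContDiff ℝ m (partialDeriv i f) :=
  (hf.fderiv_right hmk).clm_apply contDiff_const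

theorem norm_gradient_sq (f : Euc n → ℝ) (x : Euc n) :
    ‖gradient f x‖ ^ 2 = ∑ i, partialDeriv i f x ^ 2 := by
  have hcoord : ∀ i, gradient f x i = partialDeriv i f x := fun i => by
    have h := inner_gradient_left (f := f) (x := x) (y := EuclideanSpace.single i 1)
    rw [EuclideanSpace.inner_single_right] at h
    simpa [partialDeriv] using h
  simp [EuclideanSpace.norm_sq_eq, hcoord]

end PartialDeriv

theorem integral_unitCube_divergence_eq_zero_of_periodic {n : ℕ}
    (V : Fin (n + 1) → Euc (n + 1) → ℝ) (hV : ∀ i, ContDiff ℝ 1 (V i))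
    (hper : ∀ i, Periodic (V i) (EuclideanSpace.single i 1)) :
    ∫ x in unitCube (n + 1), ∑ i, partialDeriv i (V i) x = 0 := by
  let toLp := (EuclideanSpace.equiv (Fin (n + 1)) ℝ).symm
  have hfderiv : ∀ i x, fderiv ℝ (V i ∘ toLp) x (Pi.single i 1)
      = fderiv ℝ (V i) (toLp x) (EuclideanSpace.single i 1) := fun i x => by
    rw [toLp.comp_right_fderiv]
    rfl
  have hcube : unitCube (n + 1) = (MeasurableEquiv.toLp 2 _).symm ⁻¹' Icc 0 1 := by
    ext x
    simp [unitCube, Pi.le_def, forall_and]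
  rw [hcube, ← integral_Icc_divergence_eq_zero_of_periodic (fun i => V i ∘ toLp)
    (fun i => (hV i).comp toLp.contDiff) (fun i y => hper i (toLp y)),
    ← (EuclideanSpace.volume_preserving_symm_measurableEquiv_toLp _).setIntegral_preimage_emb
      (MeasurableEquiv.measurableEmbedding _)]
  simp only [hfderiv]
  rfl

def curvatureField (u : Euc 2 → ℝ) : Fin 2 → Euc 2 → ℝ :=
  ![fun x => curvaturePotential (partialDeriv 0 u x, partialDeriv 1 u x) *
      partialDeriv 1 (partialDeriv 1 u) x,
    fun x => -(curvaturePotential (partialDeriv 0 u x, partialDeriv 1 u x) *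
      partialDeriv 0 (partialDeriv 1 u) x)]

section CurvatureField

variable {u : Euc 2 → ℝ}

theorem contDiff_curvatureField (hu : ContDiff ℝ 3 u) (i : Fin 2) :
    ContDiff ℝ 1 (curvatureField u i) := by
  have hF : ContDiff ℝ 1 fun x => curvaturePotential (partialDeriv 0 u x, partialDeriv 1 u x) :=
    contDiff_curvaturePotential.comp
      ((hu.partialDeriv (by norm_num) 0).prodMk (hu.partialDeriv (by norm_num) 1))
  have hq := hu.partialDeriv (m := 2) (by norm_num) 1
  fin_cases i
  · exact hF.mul (hq.partialDeriv (by norm_num) 1)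
  · exact (hF.mul (hq.partialDeriv (by norm_num) 0)).neg

theorem Function.Periodic.curvatureField {c : Euc 2} (h : Periodic u c) (i : Fin 2) :
    Periodic (_root_.curvatureField u i) c := by
  have hp := h.partialDeriv 0
  have hq := h.partialDeriv 1
  fin_cases i <;> intro x <;>
    simp [_root_.curvatureField, hp x, hq x, (hq.partialDeriv 0) x, (hq.partialDeriv 1) x]

theorem sum_partialDeriv_curvatureField (hu : ContDiff ℝ 3 u) (x : Euc 2) :
    ∑ i, partialDeriv i (curvatureField u i) x
      = (hessian u x).det / (1 + ‖gradient u x‖ ^ 2) ^ ((3 : ℝ) / 2) := by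
  have hp := hu.partialDeriv (m := 2) (by norm_num) 0
  have hq := hu.partialDeriv (m := 2) (by norm_num) 1
  have hF : HasFDerivAt curvaturePotential _ (partialDeriv 0 u x, partialDeriv 1 u x) :=
    (contDiff_curvaturePotential.differentiable (n := 1) one_ne_zero _).hasFDerivAt
  have hjac := fderiv_comp_mul_fderiv_sub_swap hF ((hp.differentiable (by simp)) x)
    hq.contDiffAt (EuclideanSpace.single 0 1) (EuclideanSpace.single 1 1)
  convert hjac using 1
  · rw [Fin.sum_univ_two, sub_eq_add_neg, ← neg_apply, ← fderiv_neg]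
    rfl
  · rw [fderiv_curvaturePotential_apply_one_zero, one_div_mul_eq_div, Matrix.det_fin_two,
      norm_gradient_sq, Fin.sum_univ_two, mul_comm (hessian u x 0 1), ← add_assoc]
    rfl

end CurvatureField

theorem intVec_single {n : ℕ} (i : Fin n) :
    intVec (Pi.single i 1) = EuclideanSpace.single i 1 := by
  ext j
  by_cases hj : j = i <;> simp [intVec, hj]

/-- For a smooth `ℤ²`-periodic `u : ℝ² → ℝ`, the integral over one
periodicity cell of the Gaussian curvature of the graph of `u` against the area element,
i.e. of `det D²u / (1 + |∇u|²)^{3/2}`, vanishes. -/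
theorem stmt_0 (u : Euc 2 → ℝ) (hu : ContDiff ℝ (⊤ : ℕ∞) u)
    (hper : ∀ (x : Euc 2) (k : Fin 2 → ℤ), u (x + intVec k) = u x) :
    ∫ x in unitCube 2,
        (hessian u x).det / (1 + ‖gradient u x‖ ^ 2) ^ ((3 : ℝ) / 2) = 0 := by
  have hu3 : ContDiff ℝ 3 u := hu.of_le (WithTop.coe_le_coe.2 le_top)
  have hperiodic : ∀ i, Periodic u (EuclideanSpace.single i 1) := fun i x => by
    simpa [intVec_single] using hper x (Pi.single i 1)
  simp_rw [← sum_partialDeriv_curvatureField hu3]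
  exact integral_unitCube_divergence_eq_zero_of_periodic _ (contDiff_curvatureField hu3)
    fun i => (hperiodic i).curvatureField i
end
end

section
/- Let σ be a Borel probability measure on ℝ² with ∫_{ℝ²} |p| dσ(p) < ∞. Suppose that ∫_{ℝ²} |p|²/√(1+|p|²) dσ(p) = (∫_{ℝ²} p dσ(p)) · (∫_{ℝ²} p/√(1+|p|²) dσ(p)), where the right-hand side is the Euclidean inner product of the two vector-valued integrals. Then σ is a Dirac measure: there exists a ∈ ℝ² with σ = δ_a. -/
open MeasureTheory
open scoped RealInnerProductSpace

noncomputable def gfun {E : Type*} [NormedAddCommGroup E] [InnerProductSpace ℝ E] (p : E) : E :=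
  (Real.sqrt (1 + ‖p‖ ^ 2))⁻¹ • p

section aux
variable {E : Type*} [NormedAddCommGroup E] [InnerProductSpace ℝ E]

lemma sqrtH_pos (p : E) : 0 < Real.sqrt (1 + ‖p‖ ^ 2) :=
  Real.sqrt_pos.2 (by positivity)

lemma sq_sqrtH (p : E) : Real.sqrt (1 + ‖p‖ ^ 2) ^ 2 = 1 + ‖p‖ ^ 2 :=
  Real.sq_sqrt (by positivity)

lemma norm_le_sqrtH (p : E) : ‖p‖ ≤ Real.sqrt (1 + ‖p‖ ^ 2) := by
  nlinarith [sqrtH_pos p, sq_sqrtH p, sq_nonneg (‖p‖ - Real.sqrt (1 + ‖p‖ ^ 2))]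

lemma gfun_norm_le (p : E) : ‖gfun p‖ ≤ 1 := by
  rw [gfun, norm_smul, norm_inv, Real.norm_eq_abs, abs_of_pos (sqrtH_pos p)]
  have h1 := sqrtH_pos p
  have h2 := norm_le_sqrtH p
  rw [inv_mul_le_iff₀ h1, mul_one]; exact h2

lemma gfun_cont : Continuous (gfun : E → E) := by
  apply Continuous.smul
  · exact (Real.continuous_sqrt.comp (by continuity)).inv₀ fun p => (sqrtH_pos p).ne'
  · exact continuous_id

lemma gfun_expand (p q : E) :
    ⟪p - q, gfun p - gfun q⟫ =
      (Real.sqrt (1 + ‖p‖ ^ 2))⁻¹ * ‖p‖ ^ 2 + (Real.sqrt (1 + ‖q‖ ^ 2))⁻¹ * ‖q‖ ^ 2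
        - ((Real.sqrt (1 + ‖p‖ ^ 2))⁻¹ + (Real.sqrt (1 + ‖q‖ ^ 2))⁻¹) * ⟪p, q⟫ := by
  simp only [gfun, inner_sub_left, inner_sub_right, real_inner_smul_right,
    real_inner_self_eq_norm_sq, real_inner_comm q p]
  ring

lemma fmono {s t : ℝ} (hs : 0 ≤ s) (hst : s < t) :
    (Real.sqrt (1 + s ^ 2))⁻¹ * s < (Real.sqrt (1 + t ^ 2))⁻¹ * t := by
  have hA : 0 < Real.sqrt (1 + s ^ 2) := Real.sqrt_pos.2 (by positivity)
  have hB : 0 < Real.sqrt (1 + t ^ 2) := Real.sqrt_pos.2 (by positivity)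
  have hA2 : Real.sqrt (1 + s ^ 2) ^ 2 = 1 + s ^ 2 := Real.sq_sqrt (by positivity)
  have hB2 : Real.sqrt (1 + t ^ 2) ^ 2 = 1 + t ^ 2 := Real.sq_sqrt (by positivity)
  rw [inv_mul_eq_div, inv_mul_eq_div, div_lt_div_iff₀ hA hB]
  have hsq : (s * Real.sqrt (1 + t ^ 2)) ^ 2 < (t * Real.sqrt (1 + s ^ 2)) ^ 2 := by
    nlinarith
  have h0 : 0 ≤ s * Real.sqrt (1 + t ^ 2) := by positivity
  exact lt_of_pow_lt_pow_left₀ 2 (mul_nonneg (hs.trans hst.le) hA.le) hsq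

lemma gfun_mono_pos_aux {p q : E} (h : p ≠ q) (hle : ‖p‖ ≤ ‖q‖) :
    0 < ⟪p - q, gfun p - gfun q⟫ := by
  have hA := sqrtH_pos p
  have hB := sqrtH_pos q
  have hCS : ⟪p, q⟫ ≤ ‖p‖ * ‖q‖ := real_inner_le_norm p q
  rw [gfun_expand]
  rcases eq_or_lt_of_le hle with heq | hlt
  · -- equal norms: expression equals a⁻¹ * ‖p-q‖²
    have hBA : Real.sqrt (1 + ‖q‖ ^ 2) = Real.sqrt (1 + ‖p‖ ^ 2) := by rw [heq]
    have hpq : (0:ℝ) < ‖p - q‖ ^ 2 := by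
      have h0 : 0 < ‖p - q‖ := norm_pos_iff.2 (sub_ne_zero.2 h)
      positivity
    have hns : ‖p - q‖ ^ 2 = ‖p‖ ^ 2 - 2 * ⟪p, q⟫ + ‖q‖ ^ 2 := norm_sub_sq_real p q
    rw [← heq] at hns
    rw [hBA, ← heq]
    have hAi : (0:ℝ) < (Real.sqrt (1 + ‖p‖ ^ 2))⁻¹ := by positivity
    nlinarith [mul_pos hAi hpq]
  · have hf := fmono (norm_nonneg p) hlt
    nlinarith [mul_pos (sub_pos.2 hlt) (sub_pos.2 hf),
      mul_nonneg (by positivity : (0:ℝ) ≤ (Real.sqrt (1 + ‖p‖ ^ 2))⁻¹ + (Real.sqrt (1 + ‖q‖ ^ 2))⁻¹)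
        (sub_nonneg.2 hCS)]

lemma gfun_mono_pos {p q : E} (h : p ≠ q) : 0 < ⟪p - q, gfun p - gfun q⟫ := by
  -- wlog ‖p‖ ≤ ‖q‖
  rcases le_total ‖p‖ ‖q‖ with hle | hle
  · exact gfun_mono_pos_aux h hle
  · have h2 := gfun_mono_pos_aux (Ne.symm h) hle
    have heq : ⟪q - p, gfun q - gfun p⟫ = ⟪p - q, gfun p - gfun q⟫ := by
      rw [← inner_neg_neg (𝕜 := ℝ), neg_sub, neg_sub]
    rwa [heq] at h2

end aux

lemma gfun_mono_nonneg {E : Type*} [NormedAddCommGroup E] [InnerProductSpace ℝ E] (p q : E) :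
    0 ≤ ⟪p - q, gfun p - gfun q⟫ := by
  rcases eq_or_ne p q with rfl | h
  · simp
  · exact (gfun_mono_pos h).le

local notation "E2" => EuclideanSpace ℝ (Fin 2)

/-- If a Borel probability measure `σ` on `ℝ²` with finite first moment
satisfies `∫ |p|²/√(1+|p|²) dσ(p) = (∫ p dσ(p)) ⬝ (∫ p/√(1+|p|²) dσ(p))`, then `σ` is a
Dirac measure. -/
theorem stmt_1 (σ : Measure (EuclideanSpace ℝ (Fin 2))) [IsProbabilityMeasure σ]
    (hmom : Integrable (fun p : EuclideanSpace ℝ (Fin 2) => ‖p‖) σ)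
    (hyp : ∫ p, ‖p‖ ^ 2 / Real.sqrt (1 + ‖p‖ ^ 2) ∂σ =
      ⟪∫ p, p ∂σ, ∫ p, (Real.sqrt (1 + ‖p‖ ^ 2))⁻¹ • p ∂σ⟫) :
    ∃ a : EuclideanSpace ℝ (Fin 2), σ = Measure.dirac a := by
  have hgc : Continuous (gfun : E2 → E2) := gfun_cont
  have hid : Integrable (fun p : E2 => p) σ :=
    (integrable_norm_iff aestronglyMeasurable_id).mp hmom
  have hg_int : Integrable (fun p : E2 => gfun p) σ :=
    (integrable_const (1 : ℝ)).mono' hgc.aestronglyMeasurable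
      (Filter.Eventually.of_forall fun p => by simpa using gfun_norm_le p)
  have hbound : ∀ (u v : E2), ‖⟪u, gfun v⟫‖ ≤ ‖u‖ := by
    intro u v
    calc ‖⟪u, gfun v⟫‖ ≤ ‖u‖ * ‖gfun v‖ := norm_inner_le_norm u (gfun v)
    _ ≤ ‖u‖ * 1 := mul_le_mul_of_nonneg_left (gfun_norm_le v) (norm_nonneg u)
    _ = ‖u‖ := mul_one _
  set μ := σ.prod σ with hμ
  have h1 : Integrable (fun z : E2 × E2 => ‖z.1‖) μ := by
    have := hmom.mul_prod ((integrable_const (1 : ℝ)) : Integrable (fun _ : E2 => (1:ℝ)) σ)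
    simpa using this
  have h2 : Integrable (fun z : E2 × E2 => ‖z.2‖) μ := by
    have := ((integrable_const (1 : ℝ)) : Integrable (fun _ : E2 => (1:ℝ)) σ).mul_prod hmom
    simpa using this
  have hAint : Integrable (fun z : E2 × E2 => ⟪z.1, gfun z.1⟫) μ :=
    h1.mono' ((continuous_fst.inner (hgc.comp continuous_fst)).aestronglyMeasurable)
      (Filter.Eventually.of_forall fun z => by simpa using hbound z.1 z.1)
  have hBint : Integrable (fun z : E2 × E2 => ⟪z.1, gfun z.2⟫) μ :=
    h1.mono' ((continuous_fst.inner (hgc.comp continuous_snd)).aestronglyMeasurable)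
      (Filter.Eventually.of_forall fun z => by simpa using hbound z.1 z.2)
  have hCint : Integrable (fun z : E2 × E2 => ⟪z.2, gfun z.1⟫) μ :=
    h2.mono' ((continuous_snd.inner (hgc.comp continuous_fst)).aestronglyMeasurable)
      (Filter.Eventually.of_forall fun z => by simpa using hbound z.2 z.1)
  have hDint : Integrable (fun z : E2 × E2 => ⟪z.2, gfun z.2⟫) μ :=
    h2.mono' ((continuous_snd.inner (hgc.comp continuous_snd)).aestronglyMeasurable)
      (Filter.Eventually.of_forall fun z => by simpa using hbound z.2 z.2)
  have hADint : Integrable (fun z : E2 × E2 => ⟪z.1, gfun z.1⟫ + ⟪z.2, gfun z.2⟫) μ :=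
    hAint.add hDint
  have hADBint : Integrable
      (fun z : E2 × E2 => ⟪z.1, gfun z.1⟫ + ⟪z.2, gfun z.2⟫ - ⟪z.1, gfun z.2⟫) μ :=
    hADint.sub hBint
  set φ : E2 × E2 → ℝ := fun z => ⟪z.1 - z.2, gfun z.1 - gfun z.2⟫ with hφ
  have hφeq : φ = fun z : E2 × E2 =>
      ⟪z.1, gfun z.1⟫ + ⟪z.2, gfun z.2⟫ - ⟪z.1, gfun z.2⟫ - ⟪z.2, gfun z.1⟫ := by
    funext z
    simp only [hφ, inner_sub_left, inner_sub_right]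
    ring
  have hφint : Integrable φ μ := by
    rw [hφeq]; exact hADBint.sub hCint
  have hIA : ∫ z : E2 × E2, ⟪z.1, gfun z.1⟫ ∂μ = ∫ p, ⟪p, gfun p⟫ ∂σ := by
    rw [hμ, MeasureTheory.integral_prod _ hAint]
    simp
  have hID : ∫ z : E2 × E2, ⟪z.2, gfun z.2⟫ ∂μ = ∫ p, ⟪p, gfun p⟫ ∂σ := by
    rw [hμ, MeasureTheory.integral_prod _ hDint]
    have h : ∀ x : E2, ∫ y, ⟪((x, y) : E2 × E2).2, gfun ((x, y) : E2 × E2).2⟫ ∂σ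
        = ∫ p, ⟪p, gfun p⟫ ∂σ := fun x => rfl
    rw [show (fun x : E2 => ∫ y, ⟪((x, y) : E2 × E2).2, gfun ((x, y) : E2 × E2).2⟫ ∂σ)
        = fun _ : E2 => ∫ p, ⟪p, gfun p⟫ ∂σ from funext h]
    rw [integral_const]
    simp
  have hinner1 : ∀ c : E2, ∫ p, ⟪p, c⟫ ∂σ = ⟪∫ p, p ∂σ, c⟫ := by
    intro c
    rw [real_inner_comm, ← integral_inner hid c]
    exact integral_congr_ae (Filter.Eventually.of_forall fun p => real_inner_comm c p)
  have hIB : ∫ z : E2 × E2, ⟪z.1, gfun z.2⟫ ∂μ = ⟪∫ p, p ∂σ, ∫ p, gfun p ∂σ⟫ := by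
    rw [hμ, MeasureTheory.integral_prod _ hBint]
    have h : ∀ x : E2, ∫ y, ⟪x, gfun y⟫ ∂σ = ⟪x, ∫ p, gfun p ∂σ⟫ := fun x =>
      integral_inner hg_int x
    simp_rw [h]
    exact hinner1 _
  have hIC : ∫ z : E2 × E2, ⟪z.2, gfun z.1⟫ ∂μ = ⟪∫ p, p ∂σ, ∫ p, gfun p ∂σ⟫ := by
    rw [hμ, MeasureTheory.integral_prod _ hCint]
    have h : ∀ x : E2, ∫ y, ⟪y, gfun x⟫ ∂σ = ⟪∫ p, p ∂σ, gfun x⟫ := fun x => hinner1 _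
    simp_rw [h]
    exact integral_inner hg_int _
  have hAval : ∫ p, ⟪p, gfun p⟫ ∂σ = ⟪∫ p, p ∂σ, ∫ p, gfun p ∂σ⟫ := by
    have h : (fun p : E2 => ⟪p, gfun p⟫) = fun p : E2 => ‖p‖ ^ 2 / Real.sqrt (1 + ‖p‖ ^ 2) := by
      funext p
      rw [gfun, real_inner_smul_right, real_inner_self_eq_norm_sq, ← div_eq_inv_mul]
    rw [h]
    exact hyp
  have hzero : ∫ z, φ z ∂μ = 0 := by
    rw [hφeq, integral_sub hADBint hCint, integral_sub hADint hBint, integral_add hAint hDint,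
      hIA, hID, hIB, hIC, hAval]
    ring
  have hφ0 : φ =ᵐ[μ] 0 :=
    (integral_eq_zero_iff_of_nonneg (fun z : E2 × E2 => gfun_mono_nonneg z.1 z.2) hφint).mp hzero
  have hdiag : ∀ᵐ z ∂μ, z.1 = z.2 := by
    filter_upwards [hφ0] with z hz
    by_contra h
    exact (gfun_mono_pos h).ne' hz
  have hms : MeasurableSet {z : E2 × E2 | z.1 = z.2} :=
    (isClosed_eq continuous_fst continuous_snd).measurableSet
  have h0 : μ {z : E2 × E2 | z.1 = z.2}ᶜ = 0 := ae_iff.mp hdiag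
  rw [hμ, Measure.measure_prod_null hms.compl] at h0
  have hne : σ ≠ 0 := IsProbabilityMeasure.ne_zero σ
  haveI : (ae σ).NeBot := ae_neBot.mpr hne
  obtain ⟨a, ha⟩ := h0.exists
  have ha' : σ {a}ᶜ = 0 := by
    have hset : Prod.mk a ⁻¹' {z : E2 × E2 | z.1 = z.2}ᶜ = {a}ᶜ := by
      ext y
      simp [eq_comm]
    simpa [hset] using ha
  refine ⟨a, ?_⟩
  ext s hs
  rw [Measure.dirac_apply' a hs]
  by_cases has : a ∈ s
  · rw [Set.indicator_of_mem has]
    have hcompl : σ sᶜ = 0 :=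
      measure_mono_null (Set.compl_subset_compl.2 (Set.singleton_subset_iff.2 has)) ha'
    simpa using (prob_compl_eq_zero_iff hs).mp hcompl
  · rw [Set.indicator_of_notMem has]
    refine measure_mono_null ?_ ha'
    intro x hx hxa
    exact has (Set.mem_singleton_iff.mp hxa ▸ hx)
end

section
/- Define h : B → ℝ² on the open unit ball B = {z ∈ ℝ² : |z| < 1} by h(z) = z/(1 + √(1 − |z|²)); equivalently, h(z) = ((1 − √(1 − |z|²))/|z|²) z for z ≠ 0 and h(0) = 0. Then h is smooth on B and div h(z) = (1 − |z|²)^{−1/2} for every z ∈ B. -/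
noncomputable section

abbrev Euc2 := EuclideanSpace ℝ (Fin 2)

/-- Divergence of a vector field on `ℝ²`. -/
def vdiv (v : Euc2 → Euc2) (x : Euc2) : ℝ :=
  ∑ i, fderiv ℝ (fun y => v y i) x (EuclideanSpace.single i 1)

/-- The vector field `h(z) = z / (1 + √(1−|z|²))` on the open unit ball of `ℝ²`. -/
def hfield (z : Euc2) : Euc2 := (1 + Real.sqrt (1 - ‖z‖ ^ 2))⁻¹ • z

/-!
Write `h(z) = f(z) • z` with `f(z) = (1 + s)⁻¹`, `s = √(1 - |z|²)`. In the plane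
`div h = 2 f + ⟨∇f, z⟩`, and `∇f(z) = z / (s (1 + s)²)`, so using `|z|² = 1 - s²`
`div h = 2 / (1 + s) + (1 - s) / (s (1 + s)) = 1 / s`.
-/

lemma one_sub_norm_sq_pos {E : Type*} [SeminormedAddGroup E] {z : E} (hz : ‖z‖ < 1) :
    0 < 1 - ‖z‖ ^ 2 :=
  sub_pos.2 (pow_lt_one₀ (norm_nonneg z) hz two_ne_zero)

section InnerProductSpace

variable {E : Type*} [NormedAddCommGroup E] [InnerProductSpace ℝ E] {z : E}

lemma contDiffAt_sqrt_one_sub_norm_sq {n : WithTop ℕ∞} (hz : ‖z‖ < 1) :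
    ContDiffAt ℝ n (fun y : E => √(1 - ‖y‖ ^ 2)) z :=
  (contDiffAt_const.sub (contDiff_norm_sq ℝ).contDiffAt).sqrt (one_sub_norm_sq_pos hz).ne'

lemma hasFDerivAt_sqrt_one_sub_norm_sq (hz : ‖z‖ < 1) :
    HasFDerivAt (fun y : E => √(1 - ‖y‖ ^ 2)) (-(√(1 - ‖z‖ ^ 2))⁻¹ • innerSL ℝ z) z := by
  refine (((hasStrictFDerivAt_norm_sq z).hasFDerivAt.const_sub 1).sqrt
    (one_sub_norm_sq_pos hz).ne').congr_fderiv ?_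
  ext v
  simp only [one_div, mul_inv_rev, smul_neg, neg_apply, smul_apply, innerSL_apply_apply,
    nsmul_eq_mul, Nat.cast_ofNat, smul_eq_mul, neg_smul, neg_inj]
  ring

lemma hasFDerivAt_inv_one_add_sqrt_one_sub_norm_sq (hz : ‖z‖ < 1) :
    HasFDerivAt (fun y : E => (1 + √(1 - ‖y‖ ^ 2))⁻¹)
      ((√(1 - ‖z‖ ^ 2) * (1 + √(1 - ‖z‖ ^ 2)) ^ 2)⁻¹ • innerSL ℝ z) z := by
  refine ((hasDerivAt_inv (by positivity)).comp_hasFDerivAt z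
    ((hasFDerivAt_sqrt_one_sub_norm_sq hz).const_add 1)).congr_fderiv ?_
  ext v
  simp only [neg_smul, smul_neg, neg_neg, smul_apply, innerSL_apply_apply,
    smul_eq_mul, mul_inv_rev]
  ring

end InnerProductSpace

lemma vdiv_smul_self {f : Euc2 → ℝ} {f' : Euc2 →L[ℝ] ℝ} {z : Euc2} (hf : HasFDerivAt f f' z) :
    vdiv (fun y => f y • y) z = 2 * f z + f' z := by
  have hcoord (i : Fin 2) : HasFDerivAt (fun y => (f y • y) i)
      (f z • EuclideanSpace.proj i + z i • f') z :=
    hf.mul (EuclideanSpace.proj (𝕜 := ℝ) i).hasFDerivAt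
  have hf'z : f' z = ∑ i, z i * f' (EuclideanSpace.single i 1) := by
    conv_lhs => rw [← (EuclideanSpace.basisFun (Fin 2) ℝ).sum_repr z]
    simp
  calc vdiv (fun y => f y • y) z = ∑ i, (f z + z i * f' (EuclideanSpace.single i 1)) :=
        Finset.sum_congr rfl fun i _ => by rw [(hcoord i).fderiv]; simp
    _ = 2 * f z + f' z := by simp [Finset.sum_add_distrib, hf'z]

/-- The field `h(z) = z/(1+√(1−|z|²))` is smooth on the open unit ball
`B ⊆ ℝ²` and satisfies `div h(z) = (1−|z|²)^{−1/2}` for every `z ∈ B`. -/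
theorem stmt_12 :
    ContDiffOn ℝ (⊤ : ℕ∞) hfield {z : Euc2 | ‖z‖ < 1} ∧
    ∀ z : Euc2, ‖z‖ < 1 → vdiv hfield z = (Real.sqrt (1 - ‖z‖ ^ 2))⁻¹ := by
  refine ⟨fun z hz => ?_, fun z hz => ?_⟩
  · have hcoeff : ContDiffAt ℝ (⊤ : ℕ∞) (fun y : Euc2 => (1 + √(1 - ‖y‖ ^ 2))⁻¹) z :=
      (contDiffAt_const.add (contDiffAt_sqrt_one_sub_norm_sq hz)).inv (by positivity)
    exact (hcoeff.smul contDiffAt_id).contDiffWithinAt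
  · have hs : √(1 - ‖z‖ ^ 2) ^ 2 = 1 - ‖z‖ ^ 2 := Real.sq_sqrt (one_sub_norm_sq_pos hz).le
    have hs_pos : 0 < √(1 - ‖z‖ ^ 2) := Real.sqrt_pos.2 (one_sub_norm_sq_pos hz)
    unfold hfield
    rw [vdiv_smul_self (hasFDerivAt_inv_one_add_sqrt_one_sub_norm_sq hz)]
    simp only [smul_apply, innerSL_apply_apply, real_inner_self_eq_norm_sq, smul_eq_mul]
    field_simp
    linear_combination hs
end
end
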